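/- Let K be an idempotent semifield and M a module over K. If b : Basis ι K M and b' : Basis ι' K M are two bases of M, then the index types ι and ι' have the same cardinality. -/

import Mathlib

/-!
Since addition is idempotent, a sum vanishes only if every summand does. Expanding `b i` in the
basis `b'` and back, its `i`-th coordinate is `1 = ∑ⱼ b'.repr (b i) j * b.repr (b' j) i`, so some
`j` has both factors nonzero, while its vanishing `k`-th coordinates for `k ≠ i` force
`b.repr (b' j) k = 0` whenever `b'.repr (b i) j ≠ 0`. Choosing such a `j` for every `i`, and
symmetrically an `i` for every `j`, gives mutually inverse maps.
-/

theorem eq_zero_of_add_eq_zero_of_add_self {M : Type*} [AddMonoid M] {a b : M} (h : a + b = 0)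
    (ha : a + a = a) : a = 0 :=
  calc a = a + (a + b) := by rw [h, add_zero]
    _ = a + b := by rw [← add_assoc, ha]
    _ = 0 := h

theorem Finset.eq_zero_of_sum_eq_zero_of_add_self {M α : Type*} [AddCommMonoid M]
    {s : Finset α} {f : α → M} (h : ∑ x ∈ s, f x = 0) (hidem : ∀ a : M, a + a = a) {x : α}
    (hx : x ∈ s) : f x = 0 := by
  classical
  exact eq_zero_of_add_eq_zero_of_add_self ((Finset.add_sum_erase s f hx).trans h) (hidem _)

namespace Module.Basis

variable {R M ι ι' : Type*} [Semiring R] [AddCommMonoid M] [Module R M]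
  (b : Basis ι R M) (b' : Basis ι' R M)

theorem repr_apply_eq_sum_repr_mul_repr (x : M) (i : ι) :
    b.repr x i = ∑ j ∈ (b'.repr x).support, b'.repr x j * b.repr (b' j) i := by
  conv_lhs => rw [← b'.linearCombination_repr x, Finsupp.linearCombination_apply]
  simp only [Finsupp.sum, map_sum, map_smul, Finsupp.finsetSum_apply, Finsupp.smul_apply,
    smul_eq_mul]

theorem exists_repr_ne_zero_and_repr_ne_zero [Nontrivial R] (i : ι) :
    ∃ j, b'.repr (b i) j ≠ 0 ∧ b.repr (b' j) i ≠ 0 := by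
  have hsum : ∑ j ∈ (b'.repr (b i)).support, b'.repr (b i) j * b.repr (b' j) i ≠ 0 := by
    rw [← repr_apply_eq_sum_repr_mul_repr, repr_self, Finsupp.single_eq_same]
    exact one_ne_zero
  obtain ⟨j, -, hj⟩ := Finset.exists_ne_zero_of_sum_ne_zero hsum
  exact ⟨j, left_ne_zero_of_mul hj, right_ne_zero_of_mul hj⟩

theorem eq_of_repr_ne_zero_of_repr_ne_zero [NoZeroDivisors R] (hidem : ∀ a : R, a + a = a)
    {i k : ι} {j : ι'} (hij : b'.repr (b i) j ≠ 0) (hjk : b.repr (b' j) k ≠ 0) : i = k := by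
  by_contra hik
  have hsum : ∑ j ∈ (b'.repr (b i)).support, b'.repr (b i) j * b.repr (b' j) k = 0 := by
    rw [← repr_apply_eq_sum_repr_mul_repr, repr_self, Finsupp.single_eq_of_ne' hik]
  exact mul_ne_zero hij hjk
    (Finset.eq_zero_of_sum_eq_zero_of_add_self hsum hidem (Finsupp.mem_support_iff.mpr hij))

end Module.Basis

theorem idempotent_semifield_basis_card {K : Type*} [Semifield K]
    (hidem : ∀ a : K, a + a = a)
    {M : Type*} [AddCommMonoid M] [Module K M]
    {ι ι' : Type*} (b : Module.Basis ι K M) (b' : Module.Basis ι' K M) :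
    Nonempty (ι ≃ ι') := by
  choose f hf using b.exists_repr_ne_zero_and_repr_ne_zero b'
  choose g hg using b'.exists_repr_ne_zero_and_repr_ne_zero b
  refine ⟨⟨f, g, fun i => ?_, fun j => ?_⟩⟩
  · exact (b.eq_of_repr_ne_zero_of_repr_ne_zero b' hidem (hf i).1 (hg (f i)).1).symm
  · exact (b'.eq_of_repr_ne_zero_of_repr_ne_zero b hidem (hg j).1 (hf (g j)).1).symm
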